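/- Let q be a prime power and p an odd prime dividing |SL₂(F_q)| with p not dividing q. Then every Sylow p-subgroup of SL₂(F_q) is cyclic. -/

import Mathlib

/-!
`SL₂(F_q)` contains two cyclic tori: the split torus `diag(u, u⁻¹) ≅ F_qˣ` of order `q - 1`,
and the nonsplit torus of norm-one elements of `F_{q²}`, acting on `F_{q²} ≅ F_q²` by
multiplication, of order `q + 1`. As `|SL₂(F_q)| = q(q - 1)(q + 1)` and an odd prime divides at
most one of `q ± 1`, one of these tori has index prime to `p`; it therefore contains a Sylow
`p`-subgroup, which is cyclic, and all Sylow `p`-subgroups are isomorphic.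
-/

theorem Sylow.isCyclic_of_isCyclic_subgroup {G : Type*} [Group G] [Finite G] {p : ℕ}
    [Fact p.Prime] (H : Subgroup G) [IsCyclic H] {m : ℕ} (hG : Nat.card H * m = Nat.card G)
    (hm : ¬ p ∣ m) (P : Sylow p G) : IsCyclic P := by
  have hH : ¬ p ∣ H.index := by
    rwa [Nat.eq_of_mul_eq_mul_left Nat.card_pos (H.card_mul_index.trans hG.symm)]
  obtain ⟨Q⟩ : Nonempty (Sylow p H) := inferInstance
  have hQ : ¬ p ∣ (Q.map H.subtype).index := by
    rw [Subgroup.index_map_subtype]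
    exact (Fact.out : p.Prime).not_dvd_mul Q.not_dvd_index hH
  let Q' : Sylow p G := (Q.2.map H.subtype).toSylow hQ
  have : IsCyclic Q' := Subgroup.isCyclic_of_le (Subgroup.map_subtype_le Q.1)
  exact isCyclic_of_surjective _ (Q'.equiv P).surjective

theorem FiniteField.natCard_ker_unitsMap_norm_mul (F K : Type*) [Field F] [Field K] [Algebra F K]
    [Finite K] :
    Nat.card (Units.map (Algebra.norm F : K →* F)).ker * (Nat.card F - 1) = Nat.card K - 1 := by
  rw [← Nat.card_units, ← Nat.card_units,
    ← (Units.map (Algebra.norm F : K →* F)).ker.card_mul_index, Subgroup.index_ker,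
    MonoidHom.range_eq_top_of_surjective _ (unitsMap_norm_surjective F K), Subgroup.card_top]

namespace Matrix.SpecialLinearGroup

section Card

variable {n R : Type*} [Fintype n] [DecidableEq n] [CommRing R]

theorem range_toGL_eq_ker_det :
    (toGL : SpecialLinearGroup n R →* GL n R).range = GeneralLinearGroup.det.ker :=
  SetLike.coe_injective range_toGL

theorem natCard_mul_natCard_units [Nonempty n] :
    Nat.card (SpecialLinearGroup n R) * Nat.card Rˣ = Nat.card (GL n R) := by
  rw [Nat.card_congr (MonoidHom.ofInjective toGL_injective).toEquiv, range_toGL_eq_ker_det,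
    ← (GeneralLinearGroup.det : GL n R →* Rˣ).ker.card_mul_index, Subgroup.index_ker,
    MonoidHom.range_eq_top_of_surjective _ GeneralLinearGroup.det_surjective, Subgroup.card_top]

theorem natCard_fin_two (F : Type*) [Field F] [Fintype F] :
    Nat.card (SpecialLinearGroup (Fin 2) F) =
      Fintype.card F * (Fintype.card F - 1) * (Fintype.card F + 1) := by
  have hGL := natCard_mul_natCard_units (n := Fin 2) (R := F)
  rw [card_GL_field, Fin.prod_univ_two, Nat.card_units, Nat.card_eq_fintype_card (α := F)] at hGL
  obtain ⟨r, hr⟩ : ∃ r, Fintype.card F = r + 2 :=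
    ⟨_, (Nat.sub_add_cancel (Fintype.one_lt_card (α := F))).symm⟩
  rw [hr] at hGL ⊢
  refine Nat.eq_of_mul_eq_mul_right (show 0 < r + 2 - 1 by omega) (hGL.trans ?_)
  simp only [Fin.val_zero, Fin.val_one, pow_zero, pow_one]
  zify [show 1 ≤ (r + 2) ^ 2 by nlinarith, show r + 2 ≤ (r + 2) ^ 2 by nlinarith]
  push_cast
  ring

end Card

section Tori

variable {R : Type*} [CommRing R]

def diagonalFinTwo : Rˣ →* SpecialLinearGroup (Fin 2) R where
  toFun u := (⟨!![(u : R), 0; 0, ↑u⁻¹], by simp⟩ : SpecialLinearGroup (Fin 2) R)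
  map_one' := Subtype.ext <| by simp [one_fin_two]
  map_mul' u v := Subtype.ext (show !![_, _; _, _] = !![_, _; _, _] * !![_, _; _, _] by
    simp [mul_comm])

theorem diagonalFinTwo_injective : Function.Injective (diagonalFinTwo (R := R)) :=
  fun _ _ h ↦ Units.ext <| congrArg (fun g : SpecialLinearGroup (Fin 2) R ↦ g 0 0) h

variable {S ι : Type*} [CommRing S] [Algebra R S] [Fintype ι] [DecidableEq ι]

noncomputable def ofNormEqOne (b : Module.Basis ι R S) :
    (Units.map (Algebra.norm R : S →* R)).ker →* SpecialLinearGroup ι R where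
  toFun x := ⟨Algebra.leftMulMatrix b (x : Sˣ), by
    rw [← Algebra.norm_eq_matrix_det]; exact congrArg Units.val x.2⟩
  map_one' := Subtype.ext (map_one _)
  map_mul' x y := Subtype.ext (map_mul _ _ _)

theorem ofNormEqOne_injective (b : Module.Basis ι R S) : Function.Injective (ofNormEqOne b) :=
  fun _ _ h ↦ Subtype.ext <| Units.ext <| Algebra.leftMulMatrix_injective b <|
    congrArg Subtype.val h

end Tori

variable (F : Type*) [Field F] [Fintype F]

theorem exists_isCyclic_natCard_eq_card_sub_one :
    ∃ H : Subgroup (SpecialLinearGroup (Fin 2) F),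
      IsCyclic H ∧ Nat.card H = Fintype.card F - 1 :=
  ⟨diagonalFinTwo.range, isCyclic_of_surjective _ diagonalFinTwo.rangeRestrict_surjective, by
    rw [← Nat.card_congr (MonoidHom.ofInjective diagonalFinTwo_injective).toEquiv,
      Nat.card_units, Nat.card_eq_fintype_card]⟩

theorem exists_isCyclic_natCard_eq_card_add_one :
    ∃ H : Subgroup (SpecialLinearGroup (Fin 2) F),
      IsCyclic H ∧ Nat.card H = Fintype.card F + 1 := by
  let p := ringChar F
  have : Fact p.Prime := ⟨CharP.char_is_prime F p⟩
  let K := FiniteField.Extension F p 2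
  let b : Module.Basis (Fin 2) F K :=
    Module.finBasisOfFinrankEq F K (FiniteField.finrank_extension F p 2)
  refine ⟨(ofNormEqOne b).range, isCyclic_of_surjective _ (ofNormEqOne b).rangeRestrict_surjective,
    ?_⟩
  rw [← Nat.card_congr (MonoidHom.ofInjective (ofNormEqOne_injective b)).toEquiv]
  have hK := FiniteField.natCard_ker_unitsMap_norm_mul F K
  rw [FiniteField.natCard_extension, Nat.card_eq_fintype_card (α := F)] at hK
  have hq : 2 ≤ Fintype.card F := Fintype.one_lt_card
  refine Nat.eq_of_mul_eq_mul_right (show 0 < Fintype.card F - 1 by omega) (hK.trans ?_)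
  obtain ⟨r, hr⟩ : ∃ r, Fintype.card F = r + 1 := ⟨_, (Nat.sub_add_cancel (by omega)).symm⟩
  rw [hr, Nat.add_sub_cancel]
  zify [show 1 ≤ (r + 1) ^ 2 by nlinarith]
  ring

end Matrix.SpecialLinearGroup

theorem sl2_sylow_cyclic_of_odd_prime_not_dvd_char_general
    (F : Type) [Field F] [Fintype F] (p : ℕ) (hp : p.Prime) (hodd : p ≠ 2)
    (hndvd : ¬ p ∣ Fintype.card F)
    (P : Sylow p (Matrix.SpecialLinearGroup (Fin 2) F)) :
    IsCyclic ↥(P : Subgroup (Matrix.SpecialLinearGroup (Fin 2) F)) := by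
  have := Fact.mk hp
  have hcard := Matrix.SpecialLinearGroup.natCard_fin_two F
  set q := Fintype.card F
  have hq : 2 ≤ q := Fintype.one_lt_card
  by_cases hplus : p ∣ q + 1
  · have hminus : ¬ p ∣ q - 1 := by
      intro hminus
      have h2 : p ∣ 2 := by
        simpa [show q + 1 - (q - 1) = 2 by omega] using Nat.dvd_sub hplus hminus
      exact hodd ((Nat.prime_dvd_prime_iff_eq hp Nat.prime_two).mp h2)
    obtain ⟨H, _, hH⟩ := Matrix.SpecialLinearGroup.exists_isCyclic_natCard_eq_card_add_one F
    exact Sylow.isCyclic_of_isCyclic_subgroup H (m := q * (q - 1)) (by rw [hH, hcard]; ring)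
      (hp.not_dvd_mul hndvd hminus) P
  · obtain ⟨H, _, hH⟩ := Matrix.SpecialLinearGroup.exists_isCyclic_natCard_eq_card_sub_one F
    exact Sylow.isCyclic_of_isCyclic_subgroup H (m := q * (q + 1)) (by rw [hH, hcard]; ring)
      (hp.not_dvd_mul hndvd hplus) P

/-- Let `q` be a prime power and `p` an odd prime dividing `|SL₂(F_q)|` with `p ∤ q`.
Then every Sylow `p`-subgroup of `SL₂(F_q)` is cyclic. -/
theorem sl2_sylow_cyclic_of_odd_prime_not_dvd_char
    (F : Type) [Field F] [Fintype F] (p : ℕ) (hp : p.Prime) (hodd : p ≠ 2)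
    (hdvd : p ∣ Nat.card (Matrix.SpecialLinearGroup (Fin 2) F))
    (hndvd : ¬ p ∣ Fintype.card F)
    (P : Sylow p (Matrix.SpecialLinearGroup (Fin 2) F)) :
    IsCyclic ↥(P : Subgroup (Matrix.SpecialLinearGroup (Fin 2) F)) :=
  sl2_sylow_cyclic_of_odd_prime_not_dvd_char_general F p hp hodd hndvd P
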